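/- In any k-tree T (with k ≥ 2) and any node u with degree d(u) ≥ k, the number M(u) of edges among the neighbours of u equals binom(k-1,2) + (k-1)(d(u)-k+1), and consequently the local clustering coefficient of u equals C_T(u) = 2(k-1)/d(u) - (k-1)(k-2)/(d(u)(d(u)-1)). -/

import Mathlib

/-- Rooted `k`-trees on vertex set a finite subset of `ℕ`:
either a `k`-clique, or obtained by attaching a new node `u` to all vertices of an
existing `k`-clique `c`. -/
inductive IsKTree (k : ℕ) : Finset ℕ → SimpleGraph ℕ → Prop
  | base (s : Finset ℕ) (hs : s.card = k) :
      IsKTree k s (SimpleGraph.fromRel (fun a b => a ∈ s ∧ b ∈ s))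
  | extend (s : Finset ℕ) (G : SimpleGraph ℕ) (c : Finset ℕ) (u : ℕ)
      (hG : IsKTree k s G) (hc : c ⊆ s) (hcard : c.card = k)
      (hclique : ∀ a ∈ c, ∀ b ∈ c, a ≠ b → G.Adj a b) (hu : u ∉ s) :
      IsKTree k (insert u s)
        (G ⊔ SimpleGraph.fromRel (fun a b => (a = u ∧ b ∈ c) ∨ (b = u ∧ a ∈ c)))

/-- The number `M(u)` of edges of `G` both of whose endpoints are neighbours of `u`. -/
noncomputable def Medges (G : SimpleGraph ℕ) (u : ℕ) : ℕ :=
  (G.edgeSet ∩ {e : Sym2 ℕ | ∀ v ∈ e, G.Adj u v}).ncard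

/-!
The formula for `M(u)` is an invariant of the recursive construction, in the subtraction-free form
`M(u) + binom(k,2) = (k-1) d(u)`. Attaching a new vertex `w` to a `k`-clique `c` gives `w`
the clique neighbourhood `c`, so `M(w) = binom(k,2)` and `d(w) = k`; for `u ∈ c` it adds the
neighbour `w` and the `k-1` edges `wx`, `x ∈ c \ {u}`, among the neighbours of `u`; every other
vertex is untouched. The initial clique satisfies it since `binom(k-1,2) + binom(k,2) = (k-1)^2`.
-/

open Set SimpleGraph

namespace SimpleGraph

variable {V : Type*} {G : SimpleGraph V}

variable (G) in
def neighborhoodEdgeSet (u : V) : Set (Sym2 V) := G.edgeSet ∩ (G.neighborSet u).sym2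

theorem ncard_neighborhoodEdgeSet_of_isClique {u : V} {t : Finset V}
    (hN : G.neighborSet u = t) (ht : G.IsClique (t : Set V)) :
    (G.neighborhoodEdgeSet u).ncard = t.card.choose 2 := by
  classical
  have hpairs : G.neighborhoodEdgeSet u = ↑(t.offDiag.image Sym2.mk.uncurry) := by
    ext ⟨a, b⟩
    simp only [neighborhoodEdgeSet, hN, mem_inter_iff, mem_edgeSet, mk_mem_sym2_iff, Finset.mem_coe,
      Finset.coe_image, mem_image, Finset.mem_offDiag, Prod.exists, Function.uncurry_apply_pair,
      Sym2.eq_iff]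
    constructor
    · rintro ⟨hab, ha, hb⟩
      exact ⟨a, b, ⟨ha, hb, hab.ne⟩, .inl ⟨rfl, rfl⟩⟩
    · rintro ⟨x, y, ⟨hx, hy, hxy⟩, ⟨rfl, rfl⟩ | ⟨rfl, rfl⟩⟩
      exacts [⟨ht hx hy hxy, hx, hy⟩, ⟨ht hy hx (Ne.symm hxy), hy, hx⟩]
  rw [hpairs, ncard_coe_finset, Sym2.card_image_offDiag]

theorem isClique_fromRel_mem_and_mem (s : Set V) :
    (fromRel fun a b => a ∈ s ∧ b ∈ s).IsClique s :=
  fun _ ha _ hb hab => ⟨hab, .inl ⟨ha, hb⟩⟩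

theorem neighborSet_fromRel_mem_and_mem [DecidableEq V] {s : Finset V} {u : V} (hu : u ∈ s) :
    (fromRel fun a b => a ∈ s ∧ b ∈ s).neighborSet u = ↑(s.erase u) := by
  ext v
  simp only [mem_neighborSet, fromRel_adj, Finset.coe_erase, mem_sdiff, Finset.mem_coe,
    mem_singleton_iff]
  grind

variable (G) in
def attachVertex (w : V) (c : Finset V) : SimpleGraph V :=
  G ⊔ fromRel fun a b => (a = w ∧ b ∈ c) ∨ (b = w ∧ a ∈ c)

section attachVertex

variable {w u : V} {c : Finset V}

theorem attachVertex_adj (hwc : w ∉ c) {a b : V} :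
    (G.attachVertex w c).Adj a b ↔ G.Adj a b ∨ (a = w ∧ b ∈ c) ∨ (b = w ∧ a ∈ c) := by
  simp only [attachVertex, sup_adj, fromRel_adj]
  constructor
  · tauto
  · rintro (h | ⟨rfl, hb⟩ | ⟨rfl, ha⟩)
    · exact .inl h
    · exact .inr ⟨fun h => hwc (h ▸ hb), .inl (.inl ⟨rfl, hb⟩)⟩
    · exact .inr ⟨fun h => hwc (h ▸ ha), .inl (.inr ⟨rfl, ha⟩)⟩

theorem neighborSet_attachVertex_self (hw : ∀ x, ¬G.Adj w x) (hwc : w ∉ c) :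
    (G.attachVertex w c).neighborSet w = c := by
  ext v
  simp only [mem_neighborSet, attachVertex_adj hwc, Finset.mem_coe]
  constructor
  · rintro (h | ⟨-, hv⟩ | ⟨rfl, hv⟩)
    exacts [(hw v h).elim, hv, (hwc hv).elim]
  · exact fun hv => .inr (.inl ⟨trivial, hv⟩)

theorem neighborSet_attachVertex_of_mem (hwc : w ∉ c) (hu : u ∈ c) :
    (G.attachVertex w c).neighborSet u = insert w (G.neighborSet u) := by
  have huw : u ≠ w := fun h => hwc (h ▸ hu)
  ext v
  simp only [mem_neighborSet, attachVertex_adj hwc, mem_insert_iff]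
  tauto

theorem neighborSet_attachVertex_of_notMem (hwc : w ∉ c) (huw : u ≠ w) (hu : u ∉ c) :
    (G.attachVertex w c).neighborSet u = G.neighborSet u := by
  ext v
  simp only [mem_neighborSet, attachVertex_adj hwc]
  tauto

theorem neighborhoodEdgeSet_attachVertex_of_notMem (hw : ∀ x, ¬G.Adj w x) (hwc : w ∉ c)
    (huw : u ≠ w) (hu : u ∉ c) :
    (G.attachVertex w c).neighborhoodEdgeSet u = G.neighborhoodEdgeSet u := by
  ext ⟨a, b⟩
  simp only [neighborhoodEdgeSet, neighborSet_attachVertex_of_notMem hwc huw hu, mem_inter_iff,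
    mem_edgeSet, attachVertex_adj hwc, mk_mem_sym2_iff, mem_neighborSet]
  refine and_congr_left fun ⟨ha, hb⟩ => or_iff_left ?_
  rintro (⟨rfl, -⟩ | ⟨rfl, -⟩)
  exacts [hw _ ha.symm, hw _ hb.symm]

theorem neighborhoodEdgeSet_attachVertex_of_mem [DecidableEq V] (hw : ∀ x, ¬G.Adj w x)
    (hwc : w ∉ c) (hu : u ∈ c) (hc : G.IsClique (c : Set V)) :
    (G.attachVertex w c).neighborhoodEdgeSet u =
      G.neighborhoodEdgeSet u ∪ (fun x => s(w, x)) '' ↑(c.erase u) := by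
  ext ⟨a, b⟩
  simp only [neighborhoodEdgeSet, neighborSet_attachVertex_of_mem hwc hu, mem_inter_iff,
    mem_edgeSet, attachVertex_adj hwc, mk_mem_sym2_iff, mem_neighborSet, mem_insert_iff, mem_union,
    mem_image, Finset.coe_erase, mem_sdiff, Finset.mem_coe, mem_singleton_iff, Sym2.eq_iff]
  have hcu : ∀ x ∈ c, x ≠ u → G.Adj u x := fun x hx hxu => hc hu hx hxu.symm
  have hw' : ∀ x, ¬G.Adj x w := fun x h => hw x h.symm
  have huu : ¬G.Adj u u := G.irrefl
  grind

theorem ncard_neighborhoodEdgeSet_attachVertex_of_mem [DecidableEq V] (hw : ∀ x, ¬G.Adj w x)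
    (hwc : w ∉ c) (hu : u ∈ c) (hc : G.IsClique (c : Set V)) (hfin : (G.neighborSet u).Finite) :
    ((G.attachVertex w c).neighborhoodEdgeSet u).ncard =
      (G.neighborhoodEdgeSet u).ncard + (c.card - 1) := by
  have hlink : (G.neighborhoodEdgeSet u).Finite :=
    (hfin.toFinset.sym2.finite_toSet.subset (by simp)).subset inter_subset_right
  have hdisj : Disjoint (G.neighborhoodEdgeSet u) ((fun x => s(w, x)) '' ↑(c.erase u)) := by
    rw [Set.disjoint_left]
    rintro _ ⟨he, -⟩ ⟨x, -, rfl⟩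
    exact hw x he
  rw [neighborhoodEdgeSet_attachVertex_of_mem hw hwc hu hc, ncard_union_eq hdisj hlink,
    ncard_image_of_injective _ fun x y => Sym2.congr_right.1, ncard_coe_finset,
    Finset.card_erase_of_mem hu]

end attachVertex

end SimpleGraph

theorem medges_eq_ncard_neighborhoodEdgeSet (G : SimpleGraph ℕ) (u : ℕ) :
    Medges G u = (G.neighborhoodEdgeSet u).ncard := by
  have hsym2 : {e : Sym2 ℕ | ∀ v ∈ e, G.Adj u v} = (G.neighborSet u).sym2 := by
    ext ⟨a, b⟩
    simp
  rw [Medges, hsym2]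
  rfl

theorem Nat.choose_two_add_choose_two_succ (n : ℕ) : n.choose 2 + (n + 1).choose 2 = n * n := by
  apply Nat.cast_injective (R := ℚ)
  push_cast [Nat.cast_choose_two]
  ring

theorem Nat.choose_two_add_choose_two (n : ℕ) : n.choose 2 + n.choose 2 = (n - 1) * n := by
  rcases n with _ | n
  · rfl
  · apply Nat.cast_injective (R := ℚ)
    push_cast [Nat.cast_choose_two]
    ring

namespace IsKTree

variable {k : ℕ} {s : Finset ℕ} {G : SimpleGraph ℕ}

theorem mem_of_adj (h : IsKTree k s G) {a b : ℕ} (hab : G.Adj a b) : a ∈ s := by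
  induction h generalizing a b with
  | base s hs =>
    simp only [fromRel_adj] at hab
    tauto
  | extend s G c w hG hc hcard hclique hws ih =>
    have hwc : w ∉ c := fun h => hws (hc h)
    rcases (attachVertex_adj hwc).1 hab with h | ⟨rfl, -⟩ | ⟨-, ha⟩
    exacts [Finset.mem_insert_of_mem (ih h), Finset.mem_insert_self _ _,
      Finset.mem_insert_of_mem (hc ha)]

theorem neighborSet_subset (h : IsKTree k s G) (u : ℕ) : G.neighborSet u ⊆ s :=
  fun _ hv => h.mem_of_adj hv.symm

theorem medges_add_choose_two (h : IsKTree k s G) {u : ℕ} (hu : u ∈ s) :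
    Medges G u + k.choose 2 = (k - 1) * (G.neighborSet u).ncard := by
  induction h generalizing u with
  | base s hs =>
    have hN := neighborSet_fromRel_mem_and_mem hu
    have hcl := (isClique_fromRel_mem_and_mem (s : Set ℕ)).subset (s.erase_subset u)
    obtain ⟨j, rfl⟩ := Nat.exists_eq_add_one.2 (hs ▸ Finset.card_pos.2 ⟨u, hu⟩)
    rw [medges_eq_ncard_neighborhoodEdgeSet, ncard_neighborhoodEdgeSet_of_isClique hN hcl, hN,
      ncard_coe_finset, Finset.card_erase_of_mem hu, hs, Nat.add_sub_cancel,
      Nat.choose_two_add_choose_two_succ]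
  | extend s G c w hG hc hcard hclique hws ih =>
    show Medges (G.attachVertex w c) u + _ = _ * ((G.attachVertex w c).neighborSet u).ncard
    have hwc : w ∉ c := fun h => hws (hc h)
    have hw : ∀ x, ¬G.Adj w x := fun x hx => hws (hG.mem_of_adj hx)
    have hcl : G.IsClique (c : Set ℕ) := fun a ha b hb hab => hclique a ha b hb hab
    rw [medges_eq_ncard_neighborhoodEdgeSet]
    rcases Finset.mem_insert.1 hu with rfl | hus
    · have hN := neighborSet_attachVertex_self hw hwc
      rw [ncard_neighborhoodEdgeSet_of_isClique hN (hcl.mono le_sup_left), hN,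
        ncard_coe_finset, hcard, Nat.choose_two_add_choose_two]
    have huw : u ≠ w := fun h => hws (h ▸ hus)
    have ih := ih hus
    rw [medges_eq_ncard_neighborhoodEdgeSet] at ih
    by_cases huc : u ∈ c
    · have hfin : (G.neighborSet u).Finite := s.finite_toSet.subset (hG.neighborSet_subset u)
      rw [ncard_neighborhoodEdgeSet_attachVertex_of_mem hw hwc huc hcl hfin,
        neighborSet_attachVertex_of_mem hwc huc,
        ncard_insert_of_notMem (fun h => hw u h.symm) hfin, hcard, mul_add_one, ← ih]
      ring
    · rwa [neighborhoodEdgeSet_attachVertex_of_notMem hw hwc huw huc,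
        neighborSet_attachVertex_of_notMem hwc huw huc]

end IsKTree

theorem eq_choose_two_add_mul_of_add_choose_two_eq {k d m : ℕ} (hd : k ≤ d)
    (h : m + k.choose 2 = (k - 1) * d) : m = (k - 1).choose 2 + (k - 1) * (d - k + 1) := by
  rcases k with _ | k
  · simpa using h
  · simp only [Nat.add_sub_cancel] at h ⊢
    have hsub : d - (k + 1) + 1 = d - k := by omega
    rw [hsub]
    apply Nat.cast_injective (R := ℚ)
    have h' := congrArg (Nat.cast (R := ℚ)) h
    push_cast [Nat.cast_choose_two, Nat.cast_sub (by omega : k ≤ d)] at h' ⊢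
    linarith

theorem div_choose_two_eq_of_add_choose_two_eq {k d m : ℕ} (hk : 1 ≤ k) (hd : 2 ≤ d)
    (h : m + k.choose 2 = (k - 1) * d) :
    (m : ℝ) / (d.choose 2 : ℝ) =
      2 * ((k : ℝ) - 1) / (d : ℝ)
        - ((k : ℝ) - 1) * ((k : ℝ) - 2) / ((d : ℝ) * ((d : ℝ) - 1)) := by
  have h' := congrArg (Nat.cast (R := ℝ)) h
  push_cast [Nat.cast_choose_two, Nat.cast_sub hk] at h' ⊢
  have hd0 : (d : ℝ) ≠ 0 := by positivity
  have hd1 : (d : ℝ) - 1 ≠ 0 := by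
    have : (2 : ℝ) ≤ d := by exact_mod_cast hd
    linarith
  rw [eq_sub_of_add_eq h']
  field_simp
  ring

theorem ktree_clustering (k : ℕ) (hk : 2 ≤ k) (s : Finset ℕ) (G : SimpleGraph ℕ)
    (hG : IsKTree k s G) (u : ℕ) (hu : u ∈ s) (hd : k ≤ (G.neighborSet u).ncard) :
    Medges G u = Nat.choose (k - 1) 2 + (k - 1) * ((G.neighborSet u).ncard - k + 1) ∧
    (Medges G u : ℝ) / (Nat.choose ((G.neighborSet u).ncard) 2 : ℝ)
      = 2 * ((k : ℝ) - 1) / ((G.neighborSet u).ncard : ℝ)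
        - ((k : ℝ) - 1) * ((k : ℝ) - 2)
          / (((G.neighborSet u).ncard : ℝ) * (((G.neighborSet u).ncard : ℝ) - 1)) := by
  have hM := hG.medges_add_choose_two hu
  exact ⟨eq_choose_two_add_mul_of_add_choose_two_eq hd hM,
    div_choose_two_eq_of_add_choose_two_eq (by omega) (by omega) hM⟩
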